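/- arXiv:2009.02389 — 2 statements merged into one kernel-verified Lean document; each statement's English description precedes it below -/
import Mathlib

section
/- Let s be a weak composition, T an s-decreasing tree, and 1 ≤ a < b ≤ n such that (a,b) is a tree ascent of T with s(a) > 0. Then no pair (e,b) with e a labeled vertex of T^a and e < a is a tree ascent of T. -/
open scoped Classical

/-- An `s`-decreasing tree with internal vertices `1,…,n` (the root is `n`), encoded by
recording, for each non-root internal vertex `v`, its parent `parent v` (an internal vertex
with a larger label, so that labels decrease away from the root) and the index `idx v` of
the child slot of `parent v` (among `0,…,s (parent v)`, left to right) containing `v`.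
Distinct internal vertices occupy distinct child slots; all remaining slots are leaves. -/
structure SDecTree (n : ℕ) (s : ℕ → ℕ) where
  parent : ℕ → ℕ
  idx : ℕ → ℕ
  parent_gt : ∀ v, 1 ≤ v → v < n → v < parent v
  parent_le : ∀ v, 1 ≤ v → v < n → parent v ≤ n
  idx_le : ∀ v, 1 ≤ v → v < n → idx v ≤ s (parent v)
  slot_inj : ∀ v w, 1 ≤ v → v < n → 1 ≤ w → w < n →
      parent v = parent w → idx v = idx w → v = w
  parent_out : ∀ v, v = 0 ∨ n ≤ v → parent v = 0
  idx_out : ∀ v, v = 0 ∨ n ≤ v → idx v = 0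

namespace SDecTree

variable {n : ℕ} {s : ℕ → ℕ}

/-- `y` is a weak ancestor of `x`, i.e. `x` is a labeled vertex of the subtree `T^y`. -/
def Descend (T : SDecTree n s) (x y : ℕ) : Prop :=
  ∃ k, T.parent^[k] x = y ∧ ∀ m ≤ k, 1 ≤ T.parent^[m] x ∧ T.parent^[m] x ≤ n

/-- `x` is a labeled vertex of the subtree `T^y_j` rooted at the `j`-th child of `y`. -/
def InSub (T : SDecTree n s) (y j x : ℕ) : Prop :=
  ∃ c, T.Descend x c ∧ T.parent c = y ∧ T.idx c = j

/-- `x` lies strictly left of `y` in the planar tree `T`. -/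
def LeftOf (T : SDecTree n s) (x y : ℕ) : Prop :=
  ∃ z j₁ j₂, j₁ < j₂ ∧ T.InSub z j₁ x ∧ T.InSub z j₂ y

/-- The cardinality `#_T(y,x)` of the pair `(y,x)`: it is `j` if `x ∈ T^y_j`
(so `0` if `x ∈ T^y_0` and `s y` if `x ∈ T^y_{s y}`), `0` if `x` is left of `y`, and
`s y` if `x` is right of `y`; it is `0` for out-of-range pairs. -/
noncomputable def card (T : SDecTree n s) (y x : ℕ) : ℕ :=
  if h : ∃ j, T.InSub y j x then h.choose
  else if 1 ≤ x ∧ x < y ∧ y ≤ n ∧ ¬ T.LeftOf x y then s y else 0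

/-- `x` is a labeled vertex of `T^a ∖ 0`, i.e. of `T^a` with `T^a_0` replaced by a leaf. -/
def InSubMinus0 (T : SDecTree n s) (a x : ℕ) : Prop :=
  x = a ∨ ∃ j, 0 < j ∧ T.InSub a j x

/-- `(a,b)` is a tree ascent of `T`. -/
def TreeAscent (T : SDecTree n s) (a b : ℕ) : Prop :=
  1 ≤ a ∧ a < b ∧ b ≤ n ∧
  (∃ i, i < s b ∧ T.InSub b i a) ∧
  (∀ e j, a < e → e < b → T.InSub e j a → j = s e) ∧
  (0 < s a → ∀ x, ¬ T.InSub a (s a) x)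

end SDecTree

/-- A multi-inversion set (encoded by its multiplicity function) is transitive:
if `a < b < c` then `#(b,a) = 0` or `#(c,a) ≥ #(c,b)`. -/
def IsTransitiveInv (I : ℕ → ℕ → ℕ) : Prop :=
  ∀ a b c, a < b → b < c → I b a = 0 ∨ I c b ≤ I c a

/-- The transitive closure of a multi-inversion set: the smallest (by inclusion, i.e.
pointwise on multiplicities) transitive multi-inversion set containing it. -/
noncomputable def tcInv (I : ℕ → ℕ → ℕ) : ℕ → ℕ → ℕ := fun y x =>
  sInf {m | ∃ J : ℕ → ℕ → ℕ, IsTransitiveInv J ∧ (∀ y' x', I y' x' ≤ J y' x') ∧ J y x = m}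

/-- Add one copy of the inversion `(b,a)` to `I`, capping the multiplicity at `s b`. -/
def addInv (s : ℕ → ℕ) (I : ℕ → ℕ → ℕ) (b a : ℕ) : ℕ → ℕ → ℕ := fun y x =>
  if y = b ∧ x = a then min (I y x + 1) (s y) else I y x

namespace SDecTree

variable {n : ℕ} {s : ℕ → ℕ}

/-- The `s`-weak order: `T ⪯ Z` iff `#_T(y,x) ≤ #_Z(y,x)` for all pairs. -/
def wle (T Z : SDecTree n s) : Prop := ∀ y x, T.card y x ≤ Z.card y x

/-- Strict `s`-weak order. -/
def wlt (T Z : SDecTree n s) : Prop := wle T Z ∧ ¬ wle Z T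

/-- Cover relation in the `s`-weak order. -/
def wcov (T Z : SDecTree n s) : Prop := wlt T Z ∧ ∀ U, wlt T U → wlt U Z → False

/-- `W` is the join of `T` and `Z` in the `s`-weak order. -/
def IsJoin (T Z W : SDecTree n s) : Prop :=
  wle T W ∧ wle Z W ∧ ∀ U, wle T U → wle Z U → wle W U

/-- `Z` is the `s`-tree rotation of `T` along the tree ascent `(a,b)`, i.e.
`inv Z = (inv T + (b,a))^tc`. -/
def IsRotation (T Z : SDecTree n s) (a b : ℕ) : Prop :=
  T.TreeAscent a b ∧
  ∀ y x, 1 ≤ x → x < y → y ≤ n → Z.card y x = tcInv (addInv s T.card b a) y x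

/-- The set `A_T(a,b)` of inversions added by a rotation producing `Z`: the pairs `(f,e)`
with `#_Z(f,e) > #_T(f,e)`. -/
def Aset (T Z : SDecTree n s) : Set (ℕ × ℕ) :=
  {p | T.card p.1 p.2 < Z.card p.1 p.2}

/-- The set `A_T(a,b)` described directly via the transitive closure. -/
def ARot (T : SDecTree n s) (a b : ℕ) : Set (ℕ × ℕ) :=
  {p | T.card p.1 p.2 < tcInv (addInv s T.card b a) p.1 p.2}

/-- The set `F_T(a,c)` (here `b` and `d` are the partners of `a` and `c` in the
respective tree ascents `(a,b)` and `(c,d)`): it is `{(d,e) : e ∈ T^a∖0}` if `b = c`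
and `a ∈ T^c_0`, and empty otherwise. -/
def Fset (T : SDecTree n s) (a b c d : ℕ) : Set (ℕ × ℕ) :=
  {p | b = c ∧ T.InSub c 0 a ∧ p.1 = d ∧ T.InSubMinus0 a p.2}

/-- `T` is an `s`-Tamari tree: `#_T(c,a) ≤ #_T(c,b)` whenever `a < b < c`. -/
def IsTamari (T : SDecTree n s) : Prop :=
  ∀ a b c, a < b → b < c → T.card c a ≤ T.card c b

/-- `(a,b)` is a Tamari tree ascent of `T`: `a` is a non-rightmost child of `b`. -/
def TamariAscent (T : SDecTree n s) (a b : ℕ) : Prop :=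
  1 ≤ a ∧ a < n ∧ T.parent a = b ∧ T.card b a < s b

/-- `Z` is the `s`-Tamari rotation of `T` along the Tamari tree ascent `(a,b)`. -/
def IsTamRotation (T Z : SDecTree n s) (a b : ℕ) : Prop :=
  T.TamariAscent a b ∧
  ∀ y x, 1 ≤ x → x < y → y ≤ n → Z.card y x = tcInv (addInv s T.card b a) y x

/-- Cover relation in the `s`-Tamari lattice. -/
def tamcov (T Z : SDecTree n s) : Prop :=
  IsTamari T ∧ IsTamari Z ∧ wlt T Z ∧ ∀ U, IsTamari U → wlt T U → wlt U Z → False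

/-- `W` is the join of `T` and `Z` in the `s`-Tamari lattice. -/
def IsTamJoin (T Z W : SDecTree n s) : Prop :=
  IsTamari W ∧ wle T W ∧ wle Z W ∧ ∀ U, IsTamari U → wle T U → wle Z U → wle W U

/-- The open interval `(T,Z)` in the `s`-weak order. -/
def OpenInterval (T Z : SDecTree n s) : Set (SDecTree n s) := {U | wlt T U ∧ wlt U Z}

/-- A set of trees forming a chain in the `s`-weak order. -/
def IsChainSet (C : Set (SDecTree n s)) : Prop :=
  C.Pairwise fun U V => wlt U V ∨ wlt V U

/-- The geometric realization of the order complex `Δ(T,Z)` of the open interval `(T,Z)`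
in the `s`-weak order: the space of finitely supported probability vectors on the vertex
set whose support is a chain of the open interval. -/
def orderComplex (T Z : SDecTree n s) : Set (SDecTree n s → ℝ) :=
  {f | (∀ U, 0 ≤ f U) ∧ (Function.support f).Finite ∧
    Function.support f ⊆ OpenInterval T Z ∧ IsChainSet (Function.support f) ∧
    ∑ᶠ U, f U = 1}

/-- The geometric realization of the order complex of the open interval `(T,Z)` in the
`s`-Tamari lattice. -/
def tamOrderComplex (T Z : SDecTree n s) : Set (SDecTree n s → ℝ) :=
  {f | (∀ U, 0 ≤ f U) ∧ (Function.support f).Finite ∧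
    Function.support f ⊆ {U | IsTamari U ∧ wlt T U ∧ wlt U Z} ∧
    IsChainSet (Function.support f) ∧ ∑ᶠ U, f U = 1}

end SDecTree

/-- The list of labels of the consecutive cover relations along a saturated chain,
recorded as a list of poset elements. -/
def labelsOf {α : Type*} (lab : α → α → ℕ) (L : List α) : List ℕ :=
  (L.zip L.tail).map fun p => lab p.1 p.2

namespace SDecTree

variable {n : ℕ} {s : ℕ → ℕ} {T : SDecTree n s}

theorem Descend.exists_inSub_of_ne {x y : ℕ} (h : T.Descend x y) (hne : x ≠ y) :
    ∃ j, T.InSub y j x := by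
  obtain ⟨k, hk, hbound⟩ := h
  cases k with
  | zero => exact absurd hk hne
  | succ k =>
    refine ⟨T.idx (T.parent^[k] x), T.parent^[k] x, ⟨k, rfl, fun m hm => hbound m (by omega)⟩,
      ?_, rfl⟩
    rw [← Function.iterate_succ_apply' T.parent k x, hk]

end SDecTree

/-- If `(a,b)` is a tree ascent of the `s`-decreasing tree `T` with
`s a > 0`, then no pair `(e,b)` with `e` a labeled vertex of `T^a` and `e < a` is a
tree ascent of `T`. -/
theorem no_lower_ascents (n : ℕ) (s : ℕ → ℕ) (T : SDecTree n s) (a b : ℕ)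
    (hasc : T.TreeAscent a b) (hsa : 0 < s a) :
    ∀ e, e < a → T.Descend e a → ¬ T.TreeAscent e b := by
  obtain ⟨-, hab, -, -, -, hleaf⟩ := hasc
  rintro e hea hdesc ⟨-, -, -, -, hright, -⟩
  obtain ⟨j, hsub⟩ := hdesc.exists_inSub_of_ne hea.ne
  -- `a` lies strictly between `e` and `b`, so `e` must sit in the rightmost subtree of `a`,
  -- which is a leaf by the ascent condition on `(a, b)`.
  have hj : j = s a := hright a j hea hab hsub
  exact hleaf hsa e (hj ▸ hsub)
end

section
/- Let s be a weak composition, T an s-decreasing tree, and (a,b) a tree ascent of T with Z the s-tree rotation of T along (a,b). Then for 1 ≤ e < f ≤ n, the pair (f,e) lies in A_T(a,b) if and only if f = b and e is a labeled vertex of T^a∖0, and in that case #_Z(f,e) = #_T(f,e) + 1. -/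
open scoped Classical

/-!
Write `M = T^a ∖ 0` and `i = #_T(b,a)`. The closure `(inv T + (b,a))^tc` is `#_T` plus one copy
of `(b,e)` for every `e ∈ M`. This candidate contains `inv T + (b,a)`, and every transitive set
containing `inv T + (b,a)` contains it: for `e ∈ T^a_j` with `j > 0`, transitivity on
`e < a < b` forces `#(b,e) ≥ #(b,a) = i + 1`. Transitivity of the candidate is inherited from
that of `inv T` (and `#_T(z,e) = #_T(z,b)` for `e ∈ M`, `z > b`), except on triples `x < y < b`
with `y ∈ M` and `x ∉ M`. There either `#_T(y,x) = 0`, or `y` is left of `x`; then `a` is left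
of `x` as well, and the ascent conditions force `#_T(b,x) > i`.
-/

namespace SDecTree

open Relation

variable {n : ℕ} {s : ℕ → ℕ} {T : SDecTree n s} {a b j j' u v w x y z : ℕ}

-- `parent` takes the junk value `0` off the non-root vertices; `1 ≤ v` discards it.
def ChildOf (T : SDecTree n s) (u v : ℕ) : Prop := 1 ≤ v ∧ T.parent u = v

theorem ChildOf.bounds (h : T.ChildOf u v) : 1 ≤ u ∧ u < v ∧ v ≤ n := by
  obtain ⟨hv, rfl⟩ := h
  have hu : 1 ≤ u ∧ u < n := by
    by_contra hu
    have := T.parent_out u (by omega)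
    omega
  exact ⟨hu.1, T.parent_gt u hu.1 hu.2, T.parent_le u hu.1 hu.2⟩

theorem descend_iff : T.Descend x y ↔ (1 ≤ x ∧ x ≤ n) ∧ ReflTransGen T.ChildOf x y := by
  constructor
  · rintro ⟨k, rfl, hk⟩
    refine ⟨by simpa using hk 0 k.zero_le, ?_⟩
    induction k generalizing x with
    | zero => rfl
    | succ k ih =>
      rw [Function.iterate_succ_apply]
      refine .head ⟨by simpa using (hk 1 (by omega)).1, rfl⟩ (ih fun m hm => ?_)
      have := hk (m + 1) (by omega)
      rwa [Function.iterate_succ_apply] at this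
  · rintro ⟨hx, h⟩
    induction h using ReflTransGen.head_induction_on with
    | refl => exact ⟨0, rfl, fun m hm => by simpa [Nat.le_zero.1 hm] using hx⟩
    | head hxc _ ih =>
      obtain ⟨k, hk, hm⟩ := ih ⟨hxc.bounds.1.trans hxc.bounds.2.1.le, hxc.bounds.2.2⟩
      refine ⟨k + 1, by rw [Function.iterate_succ_apply, hxc.2, hk], fun m hm' => ?_⟩
      rcases m with _ | m
      · exact hx
      · rw [Function.iterate_succ_apply, hxc.2]
        exact hm m (by omega)

theorem Descend.left_mem (h : T.Descend x y) : 1 ≤ x ∧ x ≤ n := (descend_iff.1 h).1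

theorem Descend.right_mem (h : T.Descend x y) : 1 ≤ y ∧ y ≤ n := by
  obtain ⟨k, rfl, hk⟩ := h
  exact hk k le_rfl

theorem descend_refl (h1 : 1 ≤ x) (h2 : x ≤ n) : T.Descend x x :=
  descend_iff.2 ⟨⟨h1, h2⟩, .refl⟩

theorem Descend.trans (h1 : T.Descend x y) (h2 : T.Descend y z) : T.Descend x z :=
  descend_iff.2 ⟨h1.left_mem, (descend_iff.1 h1).2.trans (descend_iff.1 h2).2⟩

theorem Descend.le (h : T.Descend x y) : x ≤ y := by
  obtain ⟨-, h'⟩ := descend_iff.1 h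
  clear h
  induction h' with
  | refl => rfl
  | tail _ hc ih => exact ih.trans hc.bounds.2.1.le

theorem Descend.total (h1 : T.Descend x y) (h2 : T.Descend x z) :
    T.Descend y z ∨ T.Descend z y := by
  have hunique : Relator.RightUnique T.ChildOf := fun _ _ _ h h' => h.2.symm.trans h'.2
  exact ((descend_iff.1 h1).2.total_of_right_unique hunique (descend_iff.1 h2).2).imp
    (fun h => descend_iff.2 ⟨h1.right_mem, h⟩) (fun h => descend_iff.2 ⟨h2.right_mem, h⟩)

theorem descend_of_childOf (h : T.ChildOf x y) : T.Descend x y :=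
  descend_iff.2 ⟨⟨h.bounds.1, h.bounds.2.1.le.trans h.bounds.2.2⟩, .single h⟩

theorem descend_root (T : SDecTree n s) {x : ℕ} (h1 : 1 ≤ x) (h2 : x ≤ n) :
    T.Descend x n := by
  rcases h2.lt_or_eq with hlt | rfl
  · have hx : T.ChildOf x (T.parent x) := ⟨by have := T.parent_gt x h1 hlt; omega, rfl⟩
    exact (descend_of_childOf hx).trans
      (T.descend_root (hx.bounds.1.trans hx.bounds.2.1.le) hx.bounds.2.2)
  · exact descend_refl h1 le_rfl
termination_by n - x
decreasing_by have := T.parent_gt x h1 hlt; omega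

theorem Descend.exists_childOf (h : T.Descend x z) (hne : x ≠ z) :
    ∃ c, T.Descend x c ∧ T.ChildOf c z := by
  obtain ⟨hx, h⟩ := descend_iff.1 h
  rcases h.cases_tail with rfl | ⟨c, hxc, hcz⟩
  · exact absurd rfl hne
  · exact ⟨c, descend_iff.2 ⟨hx, hxc⟩, hcz⟩

theorem Descend.parent_descend (h : T.Descend x z) (hne : x ≠ z) :
    T.Descend (T.parent x) z := by
  obtain ⟨-, h⟩ := descend_iff.1 h
  rcases h.cases_head with rfl | ⟨c, hxc, hcz⟩
  · exact absurd rfl hne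
  · rw [hxc.2]
    exact descend_iff.2 ⟨⟨hxc.1, hxc.bounds.2.2⟩, hcz⟩

theorem Descend.exists_inSub (h : T.Descend x z) (hne : x ≠ z) : ∃ j, T.InSub z j x := by
  obtain ⟨c, hc, hcz⟩ := h.exists_childOf hne
  exact ⟨T.idx c, c, hc, hcz.2, rfl⟩

theorem InSub.unique (h : T.InSub y j x) (h' : T.InSub y j' x) : j = j' := by
  obtain ⟨c, hc, hp, rfl⟩ := h
  obtain ⟨c', hc', hp', rfl⟩ := h'
  suffices c = c' by rw [this]
  wlog hd : T.Descend c c' generalizing c c'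
  · exact (this c' hc' hp' c hc hp ((hc.total hc').resolve_left hd)).symm
  by_contra hne
  have hyc' := hp ▸ hd.parent_descend hne
  have := (ChildOf.bounds (T := T) ⟨hyc'.left_mem.1, hp'⟩).2.1
  have := hyc'.le
  omega

theorem InSub.mem (h : T.InSub y j x) : 1 ≤ x ∧ x ≤ n := by
  obtain ⟨c, hc, -, -⟩ := h
  exact hc.left_mem

theorem InSub.one_le (h : T.InSub y j x) (hj : 0 < j) : 1 ≤ y := by
  obtain ⟨c, hc, rfl, rfl⟩ := h
  rcases hc.right_mem.2.lt_or_eq with hlt | heq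
  · have := T.parent_gt c hc.right_mem.1 hlt
    omega
  · have := T.idx_out c (Or.inr heq.ge)
    omega

theorem InSub.childOf (h : T.InSub y j x) (hy : 1 ≤ y) :
    ∃ c, T.Descend x c ∧ T.ChildOf c y ∧ T.idx c = j := by
  obtain ⟨c, hc, hp, hi⟩ := h
  exact ⟨c, hc, ⟨hy, hp⟩, hi⟩

theorem InSub.descend (h : T.InSub y j x) (hy : 1 ≤ y) : T.Descend x y := by
  obtain ⟨c, hc, hcy, -⟩ := h.childOf hy
  exact hc.trans (descend_of_childOf hcy)

theorem InSub.lt (h : T.InSub y j x) (hy : 1 ≤ y) : x < y := by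
  obtain ⟨c, hc, hcy, -⟩ := h.childOf hy
  exact hc.le.trans_lt hcy.bounds.2.1

theorem InSub.le_s (h : T.InSub y j x) (hy : 1 ≤ y) : j ≤ s y := by
  obtain ⟨c, -, hcy, rfl⟩ := h.childOf hy
  have := T.idx_le c hcy.bounds.1 (hcy.bounds.2.1.trans_le hcy.bounds.2.2)
  rwa [hcy.2] at this

theorem InSub.of_descend (h : T.InSub z j w) (hd : T.Descend x w) : T.InSub z j x := by
  obtain ⟨c, hc, hp, hi⟩ := h
  exact ⟨c, hd.trans hc, hp, hi⟩

theorem InSub.up (h : T.InSub z j x) (hxw : T.Descend x w) (hwz : T.Descend w z)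
    (hne : w ≠ z) : T.InSub z j w := by
  obtain ⟨j', hj'⟩ := hwz.exists_inSub hne
  rwa [(hj'.of_descend hxw).unique h] at hj'

theorem InSub.eq_of_descend (hu : T.InSub z j u) (hv : T.InSub z j' v) (hdu : T.Descend u w)
    (hdv : T.Descend v w) (hwz : T.Descend w z) (hne : w ≠ z) : j = j' :=
  (hu.up hdu hwz hne).unique (hv.up hdv hwz hne)

theorem LeftOf.irrefl : ¬ T.LeftOf x x := by
  rintro ⟨z, j₁, j₂, hj, h₁, h₂⟩
  exact hj.ne (h₁.unique h₂)

theorem LeftOf.trans (h₁ : T.LeftOf x y) (h₂ : T.LeftOf y z) : T.LeftOf x z := by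
  obtain ⟨m₁, p₁, q₁, hpq₁, hx₁, hy₁⟩ := h₁
  obtain ⟨m₂, p₂, q₂, hpq₂, hy₂, hz₂⟩ := h₂
  have hm₁ := hy₁.one_le (by omega)
  have hm₂ := hz₂.one_le (by omega)
  rcases eq_or_ne m₁ m₂ with rfl | hne
  · have := hy₁.unique hy₂
    exact ⟨m₁, p₁, q₂, by omega, hx₁, hz₂⟩
  rcases (hy₁.descend hm₁).total (hy₂.descend hm₂) with hd | hd
  · exact ⟨m₂, p₂, q₂, hpq₂,
      (hy₂.up (hy₁.descend hm₁) hd hne).of_descend (hx₁.descend hm₁), hz₂⟩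
  · exact ⟨m₁, p₁, q₁, hpq₁, hx₁,
      (hy₁.up (hy₂.descend hm₂) hd hne.symm).of_descend (hz₂.descend hm₂)⟩

theorem LeftOf.asymm (h : T.LeftOf x y) : ¬ T.LeftOf y x := fun h' => LeftOf.irrefl (h.trans h')

theorem LeftOf.of_descend_left (h : T.LeftOf w y) (hd : T.Descend x w) : T.LeftOf x y := by
  obtain ⟨m, p, q, hpq, hw, hy⟩ := h
  exact ⟨m, p, q, hpq, hw.of_descend hd, hy⟩

theorem LeftOf.of_descend_right (h : T.LeftOf x w) (hd : T.Descend y w) : T.LeftOf x y := by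
  obtain ⟨m, p, q, hpq, hx, hw⟩ := h
  exact ⟨m, p, q, hpq, hx, hw.of_descend hd⟩

theorem LeftOf.mem (h : T.LeftOf x y) : (1 ≤ x ∧ x ≤ n) ∧ (1 ≤ y ∧ y ≤ n) := by
  obtain ⟨_, _, _, _, hx, hy⟩ := h
  exact ⟨hx.mem, hy.mem⟩

theorem LeftOf.not_descend_left (h : T.LeftOf x y) : ¬ T.Descend x y := fun hd =>
  LeftOf.irrefl (h.of_descend_right hd)

theorem LeftOf.not_descend_right (h : T.LeftOf x y) : ¬ T.Descend y x := fun hd =>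
  LeftOf.irrefl (h.of_descend_left hd)

theorem trichotomy (T : SDecTree n s) (h1 : 1 ≤ x) (hxy : x < y) (h2 : y ≤ n) :
    (∃ j, T.InSub y j x) ∨ T.LeftOf x y ∨ T.LeftOf y x := by
  set S := {z | T.Descend x z ∧ T.Descend y z}
  have hS : S.Nonempty := ⟨n, T.descend_root h1 (by omega), T.descend_root (by omega) h2⟩
  obtain ⟨hmx, hmy⟩ : sInf S ∈ S := Nat.sInf_mem hS
  rcases eq_or_ne y (sInf S) with hy | hy
  · exact .inl (hy ▸ hmx.exists_inSub (by have := hmy.le; omega))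
  obtain ⟨c₁, hc₁, hc₁m⟩ := hmx.exists_childOf (by have := hmy.le; omega)
  obtain ⟨c₂, hc₂, hc₂m⟩ := hmy.exists_childOf hy
  -- the children of the lowest common ancestor towards `x` and `y` are distinct
  have hidx : T.idx c₁ ≠ T.idx c₂ := by
    intro h
    have hc := T.slot_inj c₁ c₂ hc₁m.bounds.1 (hc₁m.bounds.2.1.trans_le hc₁m.bounds.2.2)
      hc₂m.bounds.1 (hc₂m.bounds.2.1.trans_le hc₂m.bounds.2.2) (hc₁m.2.trans hc₂m.2.symm) h
    have := Nat.sInf_le (show c₁ ∈ S from ⟨hc₁, hc ▸ hc₂⟩)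
    have := hc₁m.bounds.2.1
    omega
  rcases hidx.lt_or_gt with hlt | hlt
  · exact .inr (.inl ⟨_, _, _, hlt, ⟨c₁, hc₁, hc₁m.2, rfl⟩, ⟨c₂, hc₂, hc₂m.2, rfl⟩⟩)
  · exact .inr (.inr ⟨_, _, _, hlt, ⟨c₂, hc₂, hc₂m.2, rfl⟩, ⟨c₁, hc₁, hc₁m.2, rfl⟩⟩)

theorem card_eq_of_inSub (h : T.InSub y j x) : T.card y x = j := by
  have he : ∃ j, T.InSub y j x := ⟨j, h⟩
  rw [card, dif_pos he]
  exact he.choose_spec.unique h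

theorem card_eq_zero_of_leftOf (h : T.LeftOf x y) : T.card y x = 0 := by
  have hni : ¬ ∃ j, T.InSub y j x := fun ⟨_, hj⟩ =>
    h.not_descend_left (hj.descend h.mem.2.1)
  rw [card, dif_neg hni, if_neg (by tauto)]

theorem card_eq_s_of_leftOf (h : T.LeftOf y x) (h1 : 1 ≤ x) (hxy : x < y) (h2 : y ≤ n) :
    T.card y x = s y := by
  have hni : ¬ ∃ j, T.InSub y j x := fun ⟨_, hj⟩ =>
    h.not_descend_right (hj.descend (by omega))
  rw [card, dif_neg hni, if_pos ⟨h1, hxy, h2, h.asymm⟩]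

theorem card_ne_zero (h : T.card y x ≠ 0) : 1 ≤ x ∧ x < y ∧ y ≤ n := by
  by_cases hin : ∃ j, T.InSub y j x
  · obtain ⟨j, hj⟩ := hin
    rw [card_eq_of_inSub hj] at h
    have hy := hj.one_le (Nat.pos_of_ne_zero h)
    exact ⟨hj.mem.1, hj.lt hy, (hj.descend hy).right_mem.2⟩
  · rw [card, dif_neg hin] at h
    split_ifs at h with hrange
    · exact ⟨hrange.1, hrange.2.1, hrange.2.2.1⟩
    · exact absurd rfl h

theorem card_eq_card_of_descend (h : T.Descend u v) (hvw : v < w) (hw : w ≤ n) :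
    T.card w u = T.card w v := by
  have hu := h.left_mem
  have hv := h.right_mem
  rcases T.trichotomy hv.1 hvw hw with ⟨j, hj⟩ | hl | hl
  · rw [card_eq_of_inSub hj, card_eq_of_inSub (hj.of_descend h)]
  · rw [card_eq_zero_of_leftOf hl, card_eq_zero_of_leftOf (hl.of_descend_left h)]
  · rw [card_eq_s_of_leftOf hl hv.1 hvw hw,
      card_eq_s_of_leftOf (hl.of_descend_right h) hu.1 (h.le.trans_lt hvw) hw]

theorem card_le_card_of_leftOf (h : T.LeftOf y x) (h1 : 1 ≤ x) (hxz : x < z) (hyz : y < z)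
    (hz : z ≤ n) : T.card z y ≤ T.card z x := by
  have hy := h.mem.1
  rcases T.trichotomy hy.1 hyz hz with ⟨r, hr⟩ | hl | hl
  · rw [card_eq_of_inSub hr]
    rcases T.trichotomy h1 hxz hz with ⟨r', hr'⟩ | hl' | hl'
    · rw [card_eq_of_inSub hr']
      by_contra! hlt
      exact h.asymm ⟨z, r', r, hlt, hr', hr⟩
    · exact absurd (hl'.of_descend_right (hr.descend (by omega))) h.asymm
    · rw [card_eq_s_of_leftOf hl' h1 hxz hz]
      exact hr.le_s (by omega)
  · rw [card_eq_zero_of_leftOf hl]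
    exact Nat.zero_le _
  · rw [card_eq_s_of_leftOf hl hy.1 hyz hz, card_eq_s_of_leftOf (hl.trans h) h1 hxz hz]

theorem isTransitiveInv_of_inRange {I : ℕ → ℕ → ℕ} (hI : ∀ y x, I y x ≠ 0 → 1 ≤ x ∧ y ≤ n)
    (h : ∀ x y z, 1 ≤ x → x < y → y < z → z ≤ n → I y x = 0 ∨ I z y ≤ I z x) :
    IsTransitiveInv I := by
  intro x y z hxy hyz
  by_cases hx : 1 ≤ x
  · by_cases hz : z ≤ n
    · exact h x y z hx hxy hyz hz
    · exact .inr (by by_contra! h'; have := hI z y (by omega); omega)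
  · exact .inl (by by_contra h'; have := hI y x h'; omega)

theorem isTransitiveInv_card (T : SDecTree n s) : IsTransitiveInv T.card := by
  refine isTransitiveInv_of_inRange (n := n) (fun y x h => ?_) (fun x y z h1 hxy hyz hz => ?_)
  · exact ⟨(card_ne_zero h).1, (card_ne_zero h).2.2⟩
  rcases T.trichotomy h1 hxy (by omega) with ⟨j, hj⟩ | hl | hl
  · exact .inr (card_eq_card_of_descend (hj.descend (by omega)) hyz hz).ge
  · exact .inl (card_eq_zero_of_leftOf hl)
  · exact .inr (card_le_card_of_leftOf hl h1 (by omega) hyz hz)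

end SDecTree

theorem tcInv_eq_of_isLeast {I J : ℕ → ℕ → ℕ}
    (h : IsLeast {J | IsTransitiveInv J ∧ I ≤ J} J) : tcInv I = J := by
  have hJ : ∀ y x, J y x ∈ {m | ∃ J', IsTransitiveInv J' ∧ (∀ y' x', I y' x' ≤ J' y' x') ∧
      J' y x = m} := fun y x => ⟨J, h.1.1, h.1.2, rfl⟩
  funext y x
  refine le_antisymm (Nat.sInf_le (hJ y x)) (le_csInf ⟨_, hJ y x⟩ ?_)
  rintro _ ⟨J', hJ', hIJ', rfl⟩
  exact h.2 ⟨hJ', hIJ'⟩ y x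

theorem le_addInv {s : ℕ → ℕ} {I : ℕ → ℕ → ℕ} {a b : ℕ} (h : I b a ≤ s b) :
    I ≤ addInv s I b a := by
  intro y x
  unfold addInv
  split_ifs with hyx
  · obtain ⟨rfl, rfl⟩ := hyx
    exact le_min (Nat.le_succ _) h
  · rfl

namespace SDecTree

variable {n : ℕ} {s : ℕ → ℕ} {T : SDecTree n s} {a b j x y : ℕ}

noncomputable def rotCard (T : SDecTree n s) (a b : ℕ) : ℕ → ℕ → ℕ := fun y x =>
  T.card y x + if y = b ∧ T.InSubMinus0 a x then 1 else 0

theorem InSubMinus0.descend (h : T.InSubMinus0 a x) (ha : 1 ≤ a) (han : a ≤ n) :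
    T.Descend x a := by
  rcases h with rfl | ⟨j, -, hj⟩
  · exact descend_refl ha han
  · exact hj.descend ha

theorem InSubMinus0.of_inSub (hy : T.InSubMinus0 a y) (hx : T.InSub y j x) (hj : 0 < j) :
    T.InSubMinus0 a x := by
  rcases hy with rfl | ⟨j', hj', hy⟩
  · exact .inr ⟨j, hj, hx⟩
  · exact .inr ⟨j', hj', hy.of_descend (hx.descend (hx.one_le hj))⟩

theorem InSubMinus0.leftOf (hy : T.InSubMinus0 a y) (hx : ¬ T.InSubMinus0 a x)
    (h : T.LeftOf y x) : T.LeftOf a x := by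
  rcases hy with rfl | ⟨jy, hjy, hy⟩
  · exact h
  obtain ⟨m, p, q, hpq, hym, hxm⟩ := h
  have hm := hxm.one_le (by omega)
  have ha := hy.one_le hjy
  rcases eq_or_ne m a with rfl | hne
  · exact (hx (.inr ⟨q, by omega, hxm⟩)).elim
  rcases (hym.descend hm).total (hy.descend ha) with hma | ham
  · -- `m` lies strictly inside `T^a`, so `x` lies in the subtree `T^a_jy` of `y`
    have hxa := (hxm.descend hm).trans hma
    obtain ⟨jx, hjx⟩ := hxa.exists_inSub (by have := hma.le; have := hxm.lt hm; omega)
    have := hy.eq_of_descend hjx (hym.descend hm) (hxm.descend hm) hma hne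
    exact (hx (.inr ⟨jx, by omega, hjx⟩)).elim
  · exact ⟨m, p, q, hpq, hym.up (hy.descend ha) ham hne.symm, hxm⟩

theorem TreeAscent.card_lt_card_of_leftOf (h : T.TreeAscent a b) (hax : T.LeftOf a x)
    (hxb : x < b) : T.card b a < T.card b x := by
  obtain ⟨-, hab, hbn, ⟨i, his, hia⟩, hmid, -⟩ := h
  obtain ⟨m, p, q, hpq, ham, hxm⟩ := id hax
  have hm := hxm.one_le (by omega)
  rw [card_eq_of_inSub hia]
  rcases eq_or_ne m b with rfl | hne
  · rw [card_eq_of_inSub hxm, ← ham.unique hia]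
    exact hpq
  rcases (ham.descend hm).total (hia.descend (by omega)) with hmb | hbm
  · have := hmid m p (ham.lt hm) (lt_of_le_of_ne hmb.le hne) ham
    have := hxm.le_s hm
    omega
  · rw [card_eq_s_of_leftOf ⟨m, p, q, hpq, ham.up (hia.descend (by omega)) hbm hne.symm, hxm⟩
      hax.mem.2.1 hxb hbn]
    exact his

theorem TreeAscent.card_eq_of_inSubMinus0 (h : T.TreeAscent a b) (hx : T.InSubMinus0 a x) :
    T.card b x = T.card b a := by
  obtain ⟨ha, hab, hbn, -, -, -⟩ := h
  exact card_eq_card_of_descend (hx.descend ha (by omega)) hab hbn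

theorem TreeAscent.card_eq_zero_or_lt (h : T.TreeAscent a b) (hy : T.InSubMinus0 a y)
    (hx : ¬ T.InSubMinus0 a x) (h1 : 1 ≤ x) (hxy : x < y) (hyb : y < b) :
    T.card y x = 0 ∨ T.card b a < T.card b x := by
  have hbn := h.2.2.1
  rcases T.trichotomy h1 hxy (by omega) with ⟨j, hj⟩ | hl | hl
  · rcases Nat.eq_zero_or_pos j with rfl | hj0
    · exact .inl (card_eq_of_inSub hj)
    · exact absurd (hy.of_inSub hj hj0) hx
  · exact .inl (card_eq_zero_of_leftOf hl)
  · exact .inr (h.card_lt_card_of_leftOf (hy.leftOf hx hl) (by omega))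

theorem rotCard_of_ne (hy : y ≠ b) : T.rotCard a b y x = T.card y x := by
  simp [rotCard, hy]

theorem rotCard_of_not_inSubMinus0 (hx : ¬ T.InSubMinus0 a x) :
    T.rotCard a b y x = T.card y x := by
  simp [rotCard, hx]

theorem rotCard_of_inSubMinus0 (hx : T.InSubMinus0 a x) :
    T.rotCard a b b x = T.card b x + 1 := by
  simp [rotCard, hx]

theorem TreeAscent.isTransitiveInv_rotCard (h : T.TreeAscent a b) :
    IsTransitiveInv (T.rotCard a b) := by
  obtain ⟨ha, hab, hbn, ⟨i, -, hia⟩, -, -⟩ := id h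
  refine isTransitiveInv_of_inRange (n := n) (fun y x hyx => ?_)
    (fun x y z h1 hxy hyz hz => ?_)
  · by_cases hM : y = b ∧ T.InSubMinus0 a x
    · have := (hM.2.descend ha (by omega)).left_mem
      omega
    · simp only [rotCard, hM, if_false, add_zero] at hyx
      exact ⟨(card_ne_zero hyx).1, (card_ne_zero hyx).2.2⟩
  have hcard := T.isTransitiveInv_card x y z hxy hyz
  rcases eq_or_ne z b with rfl | hzb
  · rw [rotCard_of_ne hyz.ne]
    by_cases hy : T.InSubMinus0 a y
    · rw [rotCard_of_inSubMinus0 hy, h.card_eq_of_inSubMinus0 hy]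
      by_cases hx : T.InSubMinus0 a x
      · rw [rotCard_of_inSubMinus0 hx, h.card_eq_of_inSubMinus0 hx]
        exact .inr le_rfl
      · rw [rotCard_of_not_inSubMinus0 hx]
        exact h.card_eq_zero_or_lt hy hx h1 hxy hyz
    · rw [rotCard_of_not_inSubMinus0 hy]
      exact hcard.imp_right fun hle => hle.trans (Nat.le_add_right _ _)
  · rw [rotCard_of_ne hzb, rotCard_of_ne hzb]
    rcases eq_or_ne y b with rfl | hyb
    · by_cases hx : T.InSubMinus0 a x
      · have hxy : T.Descend x y := (hx.descend ha (by omega)).trans (hia.descend (by omega))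
        exact .inr (card_eq_card_of_descend hxy hyz hz).ge
      · rwa [rotCard_of_not_inSubMinus0 hx]
    · rwa [rotCard_of_ne hyb]

theorem TreeAscent.tcInv_addInv_eq_rotCard (h : T.TreeAscent a b) :
    tcInv (addInv s T.card b a) = T.rotCard a b := by
  obtain ⟨i, his, hia⟩ := h.2.2.2.1
  have hba : T.card b a = i := card_eq_of_inSub hia
  apply tcInv_eq_of_isLeast
  refine ⟨⟨h.isTransitiveInv_rotCard, fun y x => ?_⟩, fun J ⟨hJ, hIJ⟩ y x => ?_⟩
  · by_cases hyx : y = b ∧ x = a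
    · obtain ⟨rfl, rfl⟩ := hyx
      simp [addInv, rotCard, InSubMinus0]
    · simp [addInv, rotCard, hyx]
  have hcard : T.card ≤ J := (le_addInv (by omega)).trans hIJ
  have hJba : i + 1 ≤ J b a := by
    have := hIJ b a
    simp only [addInv, and_self, if_true, hba] at this
    omega
  show T.card y x + _ ≤ J y x
  split_ifs with hyx
  · obtain ⟨hyb, hx⟩ := hyx
    subst y
    rw [h.card_eq_of_inSubMinus0 hx, hba]
    rcases hx with rfl | ⟨j, hj, hxa⟩
    · exact hJba
    · have hax : T.card a x ≤ J a x := hcard a x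
      rw [card_eq_of_inSub hxa] at hax
      have := hJ x a b (hxa.lt h.1) h.2.1
      omega
  · exact hcard y x

end SDecTree

/-- description of the inversions added by the `s`-tree rotation of `T`
along a tree ascent `(a,b)`. -/
theorem inversions_added (n : ℕ) (s : ℕ → ℕ) (T Z : SDecTree n s) (a b : ℕ)
    (hrot : SDecTree.IsRotation T Z a b) :
    ∀ f e, 1 ≤ e → e < f → f ≤ n →
      (((f, e) ∈ SDecTree.Aset T Z) ↔ (f = b ∧ T.InSubMinus0 a e)) ∧
      (f = b → T.InSubMinus0 a e → Z.card f e = T.card f e + 1) := by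
  intro f e he hef hfn
  have hZ : Z.card f e = T.card f e + if f = b ∧ T.InSubMinus0 a e then 1 else 0 := by
    rw [hrot.2 f e he hef hfn, hrot.1.tcInv_addInv_eq_rotCard, SDecTree.rotCard]
  refine ⟨?_, fun hf he => by rw [hZ, if_pos ⟨hf, he⟩]⟩
  change T.card f e < Z.card f e ↔ _
  split_ifs at hZ with hfe
  · exact iff_of_true (by omega) hfe
  · exact iff_of_false (by omega) hfe
end
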